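/- There is a bijection between noncrossing 2-colored matchings on {1,...,2n} and Guy's walks with 2n steps, i.e., lattice walks in the first quadrant ℤ≥0 × ℤ≥0 starting and ending at (0,0) with steps from {(1,0),(-1,0),(0,1),(0,-1)}. -/

import Mathlib

/-- A `2`-colored matching on `{1,…,2n}`. -/
def IsColoredMatching (n m : ℕ) (f : Fin (2*n) → Fin (2*n)) (c : Fin (2*n) → Fin m) : Prop :=
  (∀ i, f (f i) = i) ∧ (∀ i, f i ≠ i) ∧ (∀ i, c (f i) = c i)

/-- Noncrossing: no two arcs of the same color cross. -/
def IsNoncrossing (n m : ℕ) (f : Fin (2*n) → Fin (2*n)) (c : Fin (2*n) → Fin m) : Prop :=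
  ¬ ∃ i j : Fin (2*n), c i = c j ∧ i < j ∧ j < f i ∧ f i < f j

/-- A Guy's walk with `2n` steps, encoded by its positions: it starts and ends at the
origin, stays in the first quadrant, and uses unit steps in the four directions. -/
def IsGuyWalk (n : ℕ) (w : Fin (2*n + 1) → ℤ × ℤ) : Prop :=
  w 0 = (0, 0) ∧ w (Fin.last (2*n)) = (0, 0) ∧
  (∀ i : Fin (2*n),
    w i.succ - w i.castSucc ∈ ({(1, 0), (-1, 0), (0, 1), (0, -1)} : Set (ℤ × ℤ))) ∧
  ∀ i, 0 ≤ (w i).1 ∧ 0 ≤ (w i).2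

/-!
Reading the openers of colour `a` as up-steps and its closers as down-steps turns a matching into
a path whose height is the number of open arcs of colour `a`; the two colours give the two
coordinates of a quadrant walk from the origin back to it. Conversely, every step of a Guy walk
moves one coordinate, and in that coordinate an up-step is linked to the first later step that
returns to its level. Arcs of one colour obtained this way cannot cross, as the path stays
strictly above the level of an arc inside it. For a noncrossing matching the walk gives back the
original arcs: the arcs of the same colour starting inside an arc are nested in it, so the height
stays above the arc's level inside it and returns to that level at its closer.
-/

open Finset

namespace GuyWalk

section Excursion

structure IsExcursion (H : ℕ → ℤ) (N : ℕ) : Prop where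
  zero : H 0 = 0
  eq_zero : H N = 0
  nonneg : ∀ k, 0 ≤ H k
  succ_le : ∀ k, H (k + 1) ≤ H k + 1
  le_succ : ∀ k, H k ≤ H (k + 1) + 1

/-- With `H k` the height after `k` steps, the up-step `i` is matched with the first later step
`j` that brings the path back to level `H i`. -/
def IsArc (H : ℕ → ℤ) (i j : ℕ) : Prop :=
  i < j ∧ H (j + 1) = H i ∧ ∀ k, i < k → k ≤ j → H i < H k

def IsLinked (H : ℕ → ℤ) (i j : ℕ) : Prop := IsArc H i j ∨ IsArc H j i

variable {H : ℕ → ℤ} {N i i' j j' : ℕ}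

lemma IsArc.lt_succ_left (h : IsArc H i j) : H i < H (i + 1) :=
  h.2.2 _ (by omega) (by have := h.1; omega)

lemma IsArc.succ_lt_right (h : IsArc H i j) : H (j + 1) < H j :=
  h.2.1 ▸ h.2.2 j h.1 le_rfl

lemma IsArc.le_right (h : IsArc H i j) (h' : IsArc H i j') : j ≤ j' := by
  by_contra! hlt
  have := h.2.2 (j' + 1) (by have := h'.1; omega) hlt
  rw [h'.2.1] at this
  exact lt_irrefl _ this

lemma IsArc.le_left (h : IsArc H i j) (h' : IsArc H i' j) : i' ≤ i := by
  by_contra! hlt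
  have := h.2.2 i' hlt h'.1.le
  rw [← h'.2.1, h.2.1] at this
  exact lt_irrefl _ this

lemma IsArc.not_cross (h : IsArc H i j) (h' : IsArc H i' j') (hi : i < i') (hi' : i' < j)
    (hj : j < j') : False := by
  have h₁ := h.2.2 i' hi hi'.le
  have h₂ := h'.2.2 (j + 1) (by omega) hj
  rw [h.2.1] at h₂
  exact lt_asymm h₁ h₂

lemma IsLinked.symm (h : IsLinked H i j) : IsLinked H j i := Or.symm h

lemma IsLinked.ne (h : IsLinked H i j) : i ≠ j := by
  rcases h with h | h
  · exact h.1.ne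
  · exact h.1.ne'

lemma IsLinked.unique (h : IsLinked H i j) (h' : IsLinked H i j') : j = j' := by
  rcases h with h | h <;> rcases h' with h' | h'
  · exact le_antisymm (h.le_right h') (h'.le_right h)
  · exact absurd h.lt_succ_left (lt_asymm h'.succ_lt_right)
  · exact absurd h'.lt_succ_left (lt_asymm h.succ_lt_right)
  · exact le_antisymm (h'.le_left h) (h.le_left h')

lemma IsExcursion.exists_isArc_of_lt_succ (hH : IsExcursion H N) (hi : i < N)
    (hup : H i < H (i + 1)) : ∃ j < N, IsArc H i j := by
  classical
  have hN : i + 1 < N := by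
    by_contra
    obtain rfl : N = i + 1 := by omega
    have := hH.nonneg i
    rw [hH.eq_zero] at hup
    omega
  have hlast : i < N - 1 ∧ H (N - 1 + 1) ≤ H i := by
    rw [Nat.sub_add_cancel (by omega), hH.eq_zero]
    exact ⟨by omega, hH.nonneg i⟩
  have hex : ∃ j, i < j ∧ H (j + 1) ≤ H i := ⟨N - 1, hlast⟩
  have hlt : Nat.find hex < N := by
    have := Nat.find_min' hex hlast
    omega
  obtain ⟨hij, hret⟩ := Nat.find_spec hex
  have habove : ∀ k, i < k → k ≤ Nat.find hex → H i < H k := by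
    intro k hik hk
    obtain rfl | hk' := (show k = i + 1 ∨ i + 1 < k by omega)
    · exact hup
    · obtain ⟨k, rfl⟩ : ∃ k', k = k' + 1 := ⟨k - 1, by omega⟩
      have := Nat.find_min hex (m := k) (by omega)
      rw [not_and, not_le] at this
      exact this (by omega)
  refine ⟨Nat.find hex, hlt, hij, ?_, habove⟩
  have := habove _ hij le_rfl
  have := hH.le_succ (Nat.find hex)
  omega

lemma IsExcursion.exists_isArc_of_succ_lt (hH : IsExcursion H N) (hdown : H (j + 1) < H j) :
    ∃ i < j, IsArc H i j := by
  classical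
  set i := Nat.findGreatest (fun i => H i ≤ H (j + 1)) j
  have hle : H i ≤ H (j + 1) :=
    Nat.findGreatest_spec (P := fun i => H i ≤ H (j + 1)) (Nat.zero_le j)
      (by rw [hH.zero]; exact hH.nonneg _)
  have habove : ∀ k, i < k → k ≤ j → H (j + 1) < H k :=
    fun k hik hkj => not_le.mp (Nat.findGreatest_is_greatest hik hkj)
  have hij : i < j := by
    refine lt_of_le_of_ne (Nat.findGreatest_le j) fun h => ?_
    rw [h] at hle
    omega
  have heq : H (j + 1) = H i := by
    have := habove (i + 1) (by omega) hij
    have := hH.succ_le i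
    omega
  exact ⟨i, hij, hij, heq, fun k hik hkj => heq ▸ habove k hik hkj⟩

lemma IsExcursion.exists_isLinked (hH : IsExcursion H N) (hi : i < N) (hne : H (i + 1) ≠ H i) :
    ∃ j < N, IsLinked H i j := by
  rcases lt_or_gt_of_ne hne with hdown | hup
  · obtain ⟨j, hj, h⟩ := hH.exists_isArc_of_succ_lt hdown
    exact ⟨j, by omega, Or.inr h⟩
  · obtain ⟨j, hj, h⟩ := hH.exists_isArc_of_lt_succ hi hup
    exact ⟨j, hj, Or.inl h⟩

end Excursion

section Matching

variable {n m : ℕ} {f : Fin (2 * n) → Fin (2 * n)} {c : Fin (2 * n) → Fin m}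

variable (f c) in
def arcSign (a : Fin m) (i : Fin (2 * n)) : ℤ :=
  if c i = a then if i < f i then 1 else -1 else 0

variable (f c) in
/-- The number of arcs of colour `a` open after the first `k` points. -/
def matchHeight (a : Fin m) (k : ℕ) : ℤ :=
  ∑ i : Fin (2 * n) with i.val < k, arcSign f c a i

lemma arcSign_apply_eq_neg (hm : IsColoredMatching n m f c) (a : Fin m) (i : Fin (2 * n)) :
    arcSign f c a (f i) = -arcSign f c a i := by
  unfold arcSign
  rw [hm.2.2, hm.1]
  split_ifs with hc h₁ h₂ h₂
  · exact absurd h₁ (lt_asymm h₂)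
  · norm_num
  · norm_num
  · exact absurd (lt_of_le_of_ne (not_lt.mp h₂) (hm.2.1 i)) h₁
  · norm_num

lemma sum_arcSign_eq_zero (hm : IsColoredMatching n m f c) {a : Fin m} {T : Finset (Fin (2 * n))}
    (hT : ∀ i ∈ T, c i = a → f i ∈ T) : ∑ i ∈ T, arcSign f c a i = 0 := by
  rw [← Finset.sum_filter_of_ne (p := fun i => c i = a) fun i _ h => by
    by_contra hc; simp [arcSign, hc] at h]
  refine Finset.sum_involution (fun i _ => f i) (fun i _ => by rw [arcSign_apply_eq_neg hm]; ring)
    (fun i _ _ => hm.2.1 i) (fun i hi => ?_) (fun i _ => hm.1 i)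
  rw [Finset.mem_filter] at hi ⊢
  exact ⟨hT i hi.1 hi.2, by rw [hm.2.2, hi.2]⟩

lemma sum_arcSign_nonneg (hm : IsColoredMatching n m f c) {a : Fin m} {T : Finset (Fin (2 * n))}
    (hT : ∀ i ∈ T, c i = a → f i < i → f i ∈ T) : 0 ≤ ∑ i ∈ T, arcSign f c a i := by
  rw [← Finset.sum_filter_add_sum_filter_not T (fun i => f i ∈ T)]
  have hpaired : ∑ i ∈ T with f i ∈ T, arcSign f c a i = 0 :=
    sum_arcSign_eq_zero hm fun i hi _ => by
      rw [Finset.mem_filter] at hi ⊢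
      exact ⟨hi.2, by rw [hm.1]; exact hi.1⟩
  rw [hpaired, zero_add]
  refine Finset.sum_nonneg fun i hi => ?_
  rw [Finset.mem_filter] at hi
  unfold arcSign
  split_ifs with hc hlt
  · exact zero_le_one
  · exact absurd (hT i hi.1 hc (lt_of_le_of_ne (not_lt.mp hlt) (hm.2.1 i))) hi.2
  · exact le_rfl

variable (f c) in
lemma matchHeight_sub {l k : ℕ} (a : Fin m) (h : l ≤ k) :
    matchHeight f c a k - matchHeight f c a l =
      ∑ i : Fin (2 * n) with l ≤ i.val ∧ i.val < k, arcSign f c a i := by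
  rw [sub_eq_iff_eq_add', matchHeight, matchHeight, ← Finset.sum_union]
  · congr 1
    ext i
    simp only [Finset.mem_union, Finset.mem_filter, Finset.mem_univ, true_and]
    omega
  · rw [Finset.disjoint_filter]
    intros
    omega

variable (f c) in
lemma matchHeight_succ (a : Fin m) (i : Fin (2 * n)) :
    matchHeight f c a (i + 1) = matchHeight f c a i + arcSign f c a i := by
  rw [← sub_eq_iff_eq_add', matchHeight_sub f c a (Nat.le_succ _)]
  have : (univ.filter fun j : Fin (2 * n) => i.val ≤ j.val ∧ j.val < i.val + 1) = {i} := by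
    ext j
    simp only [Finset.mem_filter, Finset.mem_univ, true_and, Finset.mem_singleton, Fin.ext_iff]
    omega
  rw [this, Finset.sum_singleton]

variable (f c) in
lemma matchHeight_zero (a : Fin m) : matchHeight f c a 0 = 0 := by
  simp [matchHeight]

variable (f c) in
lemma matchHeight_min (a : Fin m) (k : ℕ) :
    matchHeight f c a (min k (2 * n)) = matchHeight f c a k := by
  unfold matchHeight
  congr 1
  ext i
  simp only [Finset.mem_filter, Finset.mem_univ, true_and]
  omega

lemma matchHeight_nonneg (hm : IsColoredMatching n m f c) (a : Fin m) (k : ℕ) :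
    0 ≤ matchHeight f c a k :=
  sum_arcSign_nonneg hm fun i hi _ hlt => by
    simp only [Finset.mem_filter, Finset.mem_univ, true_and] at hi ⊢
    exact lt_trans (Fin.lt_def.mp hlt) hi

lemma matchHeight_two_mul (hm : IsColoredMatching n m f c) (a : Fin m) :
    matchHeight f c a (2 * n) = 0 :=
  sum_arcSign_eq_zero hm fun i _ _ => by simp

lemma IsNoncrossing.apply_mem_Ioo (hm : IsColoredMatching n m f c)
    (hnc : IsNoncrossing n m f c) {i j : Fin (2 * n)} (hc : c j = c i) (hij : i < j)
    (hj : j < f i) : i < f j ∧ f j < f i := by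
  constructor
  · by_contra! h
    rcases h.lt_or_eq with h | h
    · exact hnc ⟨f j, i, by rw [hm.2.2, hc], h, by rwa [hm.1], by rwa [hm.1]⟩
    · rw [← h, hm.1] at hj
      exact lt_irrefl _ hj
  · by_contra! h
    rcases h.lt_or_eq with h | h
    · exact hnc ⟨i, j, hc.symm, hij, hj, h⟩
    · have := congrArg f h
      rw [hm.1, hm.1] at this
      exact lt_irrefl _ (this ▸ hij)

lemma isArc_matchHeight (hm : IsColoredMatching n m f c) (hnc : IsNoncrossing n m f c)
    {i : Fin (2 * n)} (hi : i < f i) : IsArc (matchHeight f c (c i)) i (f i) := by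
  have hi' : i.val < (f i).val := hi
  have hnested {j : Fin (2 * n)} (hcj : c j = c i) (h₁ : i.val < j.val)
      (h₂ : j.val < (f i).val) :
      i.val < (f j).val ∧ (f j).val < (f i).val :=
    IsNoncrossing.apply_mem_Ioo hm hnc hcj h₁ h₂
  have hup := matchHeight_succ f c (c i) i
  rw [arcSign, if_pos rfl, if_pos hi] at hup
  have hreturn : matchHeight f c (c i) ((f i).val + 1) = matchHeight f c (c i) i := by
    have hsum := matchHeight_sub f c (c i) (show i.val ≤ (f i).val + 1 by omega)
    rw [sum_arcSign_eq_zero hm fun j hj hcj => ?_] at hsum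
    · linarith
    simp only [Finset.mem_filter, Finset.mem_univ, true_and] at hj ⊢
    rcases (show j = i ∨ j = f i ∨ (i.val < j.val ∧ j.val < (f i).val) by
      rw [Fin.ext_iff, Fin.ext_iff]; omega) with rfl | rfl | ⟨h₁, h₂⟩
    · omega
    · rw [hm.1]; omega
    · have := hnested hcj h₁ h₂
      omega
  have habove : ∀ k, i.val < k → k ≤ (f i).val →
      matchHeight f c (c i) i < matchHeight f c (c i) k := by
    intro k hik hk
    have hsum := matchHeight_sub f c (c i) (show i.val + 1 ≤ k by omega)
    have hnn := sum_arcSign_nonneg hm (a := c i)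
      (T := univ.filter fun j : Fin (2 * n) => i.val + 1 ≤ j.val ∧ j.val < k)
      fun j hj hcj hlt => by
        simp only [Finset.mem_filter, Finset.mem_univ, true_and] at hj ⊢
        have := (hnested hcj (by omega) (by omega)).1
        rw [Fin.lt_def] at hlt
        omega
    linarith
  exact ⟨hi, hreturn, habove⟩

lemma isLinked_matchHeight (hm : IsColoredMatching n m f c) (hnc : IsNoncrossing n m f c)
    (i : Fin (2 * n)) : IsLinked (matchHeight f c (c i)) i (f i) := by
  rcases lt_or_gt_of_ne (hm.2.1 i) with h | h
  · have := isArc_matchHeight hm hnc (i := f i) (by rwa [hm.1])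
    rw [hm.2.2, hm.1] at this
    exact Or.inr this
  · exact Or.inl (isArc_matchHeight hm hnc h)

end Matching

section Walk

variable {n : ℕ} {f : Fin (2 * n) → Fin (2 * n)} {c : Fin (2 * n) → Fin 2}
  {w : Fin (2 * n + 1) → ℤ × ℤ}

variable (f c) in
def walkOf : Fin (2 * n + 1) → ℤ × ℤ := fun k => (matchHeight f c 0 k, matchHeight f c 1 k)

lemma isGuyWalk_walkOf (hm : IsColoredMatching n 2 f c) : IsGuyWalk n (walkOf f c) := by
  refine ⟨?_, ?_, fun i => ?_, fun k =>
     ⟨matchHeight_nonneg hm 0 k, matchHeight_nonneg hm 1 k⟩⟩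
  · simp [walkOf, matchHeight_zero]
  · simp [walkOf, matchHeight_two_mul hm]
  · have hstep :
        walkOf f c i.succ - walkOf f c i.castSucc = (arcSign f c 0 i, arcSign f c 1 i) := by
      simp only [walkOf, Fin.val_succ, Fin.val_castSucc, matchHeight_succ, Prod.mk_sub_mk,
        add_sub_cancel_left]
    rw [hstep]
    obtain hc | hc : c i = 0 ∨ c i = 1 := by omega
    all_goals rcases lt_or_gt_of_ne (hm.2.1 i) with h | h
    all_goals simp [arcSign, hc, h, not_lt_of_gt h]

/-- Coordinate `a` of `w` as a function of time, frozen after time `2 * n`. -/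
def walkHeight (w : Fin (2 * n + 1) → ℤ × ℤ) (a : Fin 2) (k : ℕ) : ℤ :=
  ![(w ⟨min k (2 * n), by omega⟩).1, (w ⟨min k (2 * n), by omega⟩).2] a

def stepColor (w : Fin (2 * n + 1) → ℤ × ℤ) (i : Fin (2 * n)) : Fin 2 :=
  if walkHeight w 0 (i + 1) = walkHeight w 0 i then 1 else 0

variable (f c) in
lemma walkHeight_walkOf (a : Fin 2) : walkHeight (walkOf f c) a = matchHeight f c a := by
  funext k
  fin_cases a <;> simp [walkHeight, walkOf, matchHeight_min]

lemma walkHeight_of_le (a : Fin 2) {k : ℕ} (hk : 2 * n ≤ k) :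
    walkHeight w a k = walkHeight w a (2 * n) := by
  simp [walkHeight, min_eq_right hk]

lemma walkHeight_step (hw : IsGuyWalk n w) (i : Fin (2 * n)) (a : Fin 2) :
    stepColor w i = a ∧ (walkHeight w a (i + 1) = walkHeight w a i + 1 ∨
        walkHeight w a (i + 1) + 1 = walkHeight w a i) ∨
      stepColor w i ≠ a ∧ walkHeight w a (i + 1) = walkHeight w a i := by
  have hmem := hw.2.2.1 i
  simp only [Set.mem_insert_iff, Set.mem_singleton_iff, Prod.ext_iff, Prod.fst_sub,
    Prod.snd_sub] at hmem
  have hs : (⟨min (i + 1) (2 * n), by omega⟩ : Fin (2 * n + 1)) = i.succ := by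
    ext; simp
  have hc : (⟨min i (2 * n), by omega⟩ : Fin (2 * n + 1)) = i.castSucc := by
    ext; simp
  fin_cases a <;>
    rcases hmem with ⟨h₁, h₂⟩ | ⟨h₁, h₂⟩ | ⟨h₁, h₂⟩ | ⟨h₁, h₂⟩ <;>
    simp only [stepColor, walkHeight, hs, hc, Fin.zero_eta, Fin.mk_one, Matrix.cons_val_zero,
      Matrix.cons_val_one, Matrix.cons_val_fin_one] <;>
    split_ifs <;> simp <;> omega

lemma walkHeight_succ_of_ne (hw : IsGuyWalk n w) {i : Fin (2 * n)} {a : Fin 2}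
    (h : stepColor w i ≠ a) : walkHeight w a (i + 1) = walkHeight w a i := by
  rcases walkHeight_step hw i a with ⟨h', -⟩ | ⟨-, h'⟩
  · exact absurd h' h
  · exact h'

lemma stepColor_eq_of_walkHeight_ne (hw : IsGuyWalk n w) {i : Fin (2 * n)} {a : Fin 2}
    (h : walkHeight w a (i + 1) ≠ walkHeight w a i) : stepColor w i = a := by
  by_contra hne
  exact h (walkHeight_succ_of_ne hw hne)

lemma walkHeight_stepColor (hw : IsGuyWalk n w) (i : Fin (2 * n)) :
    walkHeight w (stepColor w i) (i + 1) = walkHeight w (stepColor w i) i + 1 ∨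
      walkHeight w (stepColor w i) (i + 1) + 1 = walkHeight w (stepColor w i) i := by
  rcases walkHeight_step hw i (stepColor w i) with ⟨-, h⟩ | ⟨h, -⟩
  · exact h
  · exact absurd rfl h

lemma isExcursion_walkHeight (hw : IsGuyWalk n w) (a : Fin 2) :
    IsExcursion (walkHeight w a) (2 * n) := by
  have hsucc : ∀ k, walkHeight w a (k + 1) ≤ walkHeight w a k + 1 ∧
      walkHeight w a k ≤ walkHeight w a (k + 1) + 1 := by
    intro k
    by_cases hk : k < 2 * n
    · rcases walkHeight_step hw ⟨k, hk⟩ a with ⟨-, h | h⟩ | ⟨-, h⟩ <;>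
        simp only at h <;> omega
    · rw [walkHeight_of_le a (by omega : 2 * n ≤ k + 1), walkHeight_of_le a (not_lt.mp hk)]
      omega
  refine ⟨?_, ?_, fun k => ?_, fun k => (hsucc k).1, fun k => (hsucc k).2⟩
  · fin_cases a <;> simp [walkHeight, hw.1]
  · have := hw.2.1
    fin_cases a <;> simp_all [walkHeight, Fin.last]
  · fin_cases a <;> simp [walkHeight, hw.2.2.2]

lemma stepColor_eq_of_isLinked (hw : IsGuyWalk n w) {a : Fin 2} {i j : Fin (2 * n)}
    (h : IsLinked (walkHeight w a) i j) : stepColor w i = a := by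
  refine stepColor_eq_of_walkHeight_ne hw ?_
  rcases h with h | h
  · exact h.lt_succ_left.ne'
  · exact h.succ_lt_right.ne

open Classical in
noncomputable def walkPartner (w : Fin (2 * n + 1) → ℤ × ℤ) (i : Fin (2 * n)) :
    Fin (2 * n) :=
  if h : ∃ j : Fin (2 * n), IsLinked (walkHeight w (stepColor w i)) i j then h.choose else i

lemma walkPartner_eq {i j : Fin (2 * n)} (h : IsLinked (walkHeight w (stepColor w i)) i j) :
    walkPartner w i = j := by
  have hex : ∃ j : Fin (2 * n), IsLinked (walkHeight w (stepColor w i)) i j := ⟨j, h⟩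
  rw [walkPartner, dif_pos hex]
  exact Fin.ext (hex.choose_spec.unique h)

lemma isLinked_walkPartner (hw : IsGuyWalk n w) (i : Fin (2 * n)) :
    IsLinked (walkHeight w (stepColor w i)) i (walkPartner w i) := by
  obtain ⟨j, hj, h⟩ := (isExcursion_walkHeight hw (stepColor w i)).exists_isLinked i.isLt
    (by rcases walkHeight_stepColor hw i with h | h <;> omega)
  rwa [walkPartner_eq (j := ⟨j, hj⟩) h]

lemma isColoredMatching_walkPartner (hw : IsGuyWalk n w) :
    IsColoredMatching n 2 (walkPartner w) (stepColor w) := by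
  have hcol : ∀ i, stepColor w (walkPartner w i) = stepColor w i :=
    fun i => stepColor_eq_of_isLinked hw (isLinked_walkPartner hw i).symm
  refine ⟨fun i => walkPartner_eq ?_, fun i h => ?_, hcol⟩
  · rw [hcol]
    exact (isLinked_walkPartner hw i).symm
  · exact (isLinked_walkPartner hw i).ne (congrArg Fin.val h).symm

lemma isArc_walkPartner (hw : IsGuyWalk n w) {i : Fin (2 * n)} (hi : i < walkPartner w i) :
    IsArc (walkHeight w (stepColor w i)) i (walkPartner w i) :=
  (isLinked_walkPartner hw i).resolve_right fun h => lt_asymm hi h.1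

lemma isArc_walkPartner_of_lt (hw : IsGuyWalk n w) {i : Fin (2 * n)}
    (hi : walkPartner w i < i) :
    IsArc (walkHeight w (stepColor w i)) (walkPartner w i) i :=
  (isLinked_walkPartner hw i).resolve_left fun h => lt_asymm hi h.1

lemma isNoncrossing_walkPartner (hw : IsGuyWalk n w) :
    IsNoncrossing n 2 (walkPartner w) (stepColor w) := by
  rintro ⟨i, j, hc, hij, hj, hfj⟩
  have hj' := isArc_walkPartner hw (hj.trans hfj)
  rw [← hc] at hj'
  exact (isArc_walkPartner hw (hij.trans hj)).not_cross hj' hij hj hfj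

lemma walkHeight_succ (hw : IsGuyWalk n w) (a : Fin 2) (i : Fin (2 * n)) :
    walkHeight w a (i + 1) =
      walkHeight w a i + arcSign (walkPartner w) (stepColor w) a i := by
  unfold arcSign
  split_ifs with hc hi
  · have := (isArc_walkPartner hw hi).lt_succ_left
    rcases walkHeight_stepColor hw i with h | h <;> rw [hc] at h this <;> omega
  · have := (isArc_walkPartner_of_lt hw (lt_of_le_of_ne (not_lt.mp hi)
      ((isColoredMatching_walkPartner hw).2.1 i))).succ_lt_right
    rcases walkHeight_stepColor hw i with h | h <;> rw [hc] at h this <;> omega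
  · rw [walkHeight_succ_of_ne hw hc, add_zero]

lemma matchHeight_walkPartner (hw : IsGuyWalk n w) (a : Fin 2) {k : ℕ} (hk : k ≤ 2 * n) :
    matchHeight (walkPartner w) (stepColor w) a k = walkHeight w a k := by
  induction k with
  | zero => simp [matchHeight_zero, (isExcursion_walkHeight hw a).zero]
  | succ k ih =>
    rw [matchHeight_succ _ _ a ⟨k, by omega⟩, walkHeight_succ hw a ⟨k, by omega⟩,
      ih (by omega)]

lemma walkOf_walkPartner (hw : IsGuyWalk n w) : walkOf (walkPartner w) (stepColor w) = w := by
  funext k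
  have hk : min k.val (2 * n) = k := min_eq_left (by omega)
  ext
  · simp [walkOf, matchHeight_walkPartner hw 0 (by omega : k.val ≤ 2 * n), walkHeight, hk]
  · simp [walkOf, matchHeight_walkPartner hw 1 (by omega : k.val ≤ 2 * n), walkHeight, hk]

lemma stepColor_walkOf (hm : IsColoredMatching n 2 f c) : stepColor (walkOf f c) = c := by
  funext i
  rw [stepColor, walkHeight_walkOf, matchHeight_succ]
  obtain hc | hc : c i = 0 ∨ c i = 1 := by omega
  all_goals rcases lt_or_gt_of_ne (hm.2.1 i) with h | h
  all_goals simp [arcSign, hc, h, not_lt_of_gt h]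

lemma walkPartner_walkOf (hm : IsColoredMatching n 2 f c) (hnc : IsNoncrossing n 2 f c) :
    walkPartner (walkOf f c) = f :=
  funext fun i => walkPartner_eq <| by
    rw [stepColor_walkOf hm, walkHeight_walkOf]
    exact isLinked_matchHeight hm hnc i

end Walk

end GuyWalk

/-- Noncrossing 2-colored matchings on `{1,…,2n}` are in bijection with Guy's walks
with `2n` steps. -/
theorem stmt9 (n : ℕ) :
    Nonempty ({p : (Fin (2*n) → Fin (2*n)) × (Fin (2*n) → Fin 2) //
        IsColoredMatching n 2 p.1 p.2 ∧ IsNoncrossing n 2 p.1 p.2} ≃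
      {w : Fin (2*n + 1) → ℤ × ℤ // IsGuyWalk n w}) :=
  ⟨{ toFun := fun p => ⟨GuyWalk.walkOf p.1.1 p.1.2, GuyWalk.isGuyWalk_walkOf p.2.1⟩
     invFun := fun w => ⟨(GuyWalk.walkPartner w.1, GuyWalk.stepColor w.1),
       GuyWalk.isColoredMatching_walkPartner w.2, GuyWalk.isNoncrossing_walkPartner w.2⟩
     left_inv := fun p => Subtype.ext <|
       Prod.ext (GuyWalk.walkPartner_walkOf p.2.1 p.2.2) (GuyWalk.stepColor_walkOf p.2.1)
     right_inv := fun w => Subtype.ext (GuyWalk.walkOf_walkPartner w.2) }⟩
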